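/- A finite, bounded, atomistic, graded lattice 𝓛 is geometric (i.e., its rank function is submodular) if and only if every independent set I of 𝓛 satisfies rank(⋁I) = |I|. -/

import Mathlib

variable {L : Type*} [Lattice L] [BoundedOrder L] [Fintype L] [DecidableEq L]

/-- The set `D` of atoms is bounded below (BB) with respect to the strict order `ω`
on the atoms: `D` is nonempty and some atom `a` is a strict `ω`-lower bound of every
element of `D` with `a ≤ ⋁ D`. -/
def BddBel (ω : {a : L // IsAtom a} → {a : L // IsAtom a} → Prop)
    (D : Finset {a : L // IsAtom a}) : Prop :=
  D.Nonempty ∧ ∃ a : {a : L // IsAtom a}, (∀ d ∈ D, ω a d) ∧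
    (a : L) ≤ D.sup (Subtype.val)

/-- `B` is NBB with respect to `ω` if it contains no bounded below subset. -/
def IsNBB (ω : {a : L // IsAtom a} → {a : L // IsAtom a} → Prop)
    (B : Finset {a : L // IsAtom a}) : Prop :=
  ∀ D ⊆ B, ¬ BddBel ω D

/-- A set of atoms is independent if it is NBB for some linear (strict total) order
on the atoms. -/
def IndepSet (B : Finset {a : L // IsAtom a}) : Prop :=
  ∃ ω : {a : L // IsAtom a} → {a : L // IsAtom a} → Prop,
    IsStrictTotalOrder _ ω ∧ IsNBB ω B

/-- `r` is the rank function of the graded lattice `L`. -/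
def IsRankFn (r : L → ℕ) : Prop :=
  r ⊥ = 0 ∧ ∀ a b : L, a ⋖ b → r b = r a + 1

/-- `L` is atomistic: every element is a join of atoms. -/
def AtomisticL (L : Type*) [Lattice L] [BoundedOrder L] [DecidableEq L] : Prop :=
  ∀ x : L, ∃ S : Finset {a : L // IsAtom a}, x = S.sup Subtype.val

/-! Both sides are equivalent to the one-step bound `r (x ⊔ a) ≤ r x + 1` for atoms `a`.
Submodularity gives it at once; conversely, in an atomistic lattice every cover `u ⋖ z` is a
join `z = u ⊔ a` with an atom, so climbing a maximal chain from `x ⊓ y` to `y` yields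
submodularity.

Under the one-step bound, the join of an NBB set grows by exactly one each time an element is
added in decreasing `ω`-order: the new element is `ω`-below all previous ones, so lying below
their join would make them a BB set. Conversely, an irredundant set of atoms is NBB for any
order that lists it first, hence independent, so its size is the rank of its join. If `J` is
irredundant with join `x`, an irredundant subset of `J ∪ {a}` with the same join then bounds
`r (x ⊔ a)` by `#J + 1 = r x + 1`. -/

open Finset

theorem exists_isStrictTotalOrder_forall_mem_rel {β : Type*} (s : Set β) :
    ∃ ω : β → β → Prop, IsStrictTotalOrder β ω ∧ ∀ a ∈ s, ∀ b ∉ s, ω a b := by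
  classical
  let _ : LinearOrder β := IsWellOrder.linearOrder WellOrderingRel
  let f : β → Bool ×ₗ β := fun a => toLex (decide (a ∉ s), a)
  have hf : f.Injective := fun a b h => congrArg (fun p => (ofLex p).2) h
  refine ⟨fun a b => f a < f b, @instIsStrictTotalOrderLt β (LinearOrder.lift' f hf), ?_⟩
  intro a ha b hb
  simp [f, ha, hb, Prod.Lex.lt_iff]

section Lattice

variable {α : Type*} [Lattice α] [BoundedOrder α] {r : α → ℕ}

theorem IsRankFn.strictMono [Finite α] (hr : IsRankFn r) : StrictMono r := by
  classical
  have := Fintype.ofFinite α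
  have := Fintype.toLocallyFiniteOrder (α := α)
  refine (strictMono_iff_forall_covBy r).2 fun a b hab => ?_
  rw [hr.2 a b hab]
  exact r a |>.lt_succ_self

theorem IsRankFn.rank_of_isAtom (hr : IsRankFn r) {a : α} (ha : IsAtom a) : r a = 1 := by
  rw [hr.2 ⊥ a ha.bot_covBy, hr.1]

theorem IsRankFn.rank_sup_atom_of_not_le [Finite α] (hr : IsRankFn r)
    (hstep : ∀ x a : α, IsAtom a → r (x ⊔ a) ≤ r x + 1) {x a : α} (ha : IsAtom a)
    (hax : ¬ a ≤ x) : r (x ⊔ a) = r x + 1 :=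
  le_antisymm (hstep x a ha) (hr.strictMono (left_lt_sup.2 hax))

theorem exists_isAtom_sup_eq_of_covBy [DecidableEq α] (hatom : AtomisticL α) {u z : α}
    (h : u ⋖ z) : ∃ a, IsAtom a ∧ u ⊔ a = z := by
  obtain ⟨S, rfl⟩ := hatom z
  obtain ⟨a, haS, hau⟩ : ∃ a ∈ S, ¬ (a : α) ≤ u := by
    by_contra! hS
    exact h.lt.not_ge (Finset.sup_le hS)
  refine ⟨a, a.2, (h.eq_or_eq le_sup_left (sup_le h.le (le_sup haS))).resolve_left ?_⟩
  exact fun he => hau (he ▸ le_sup_right)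

theorem IsRankFn.rank_sup_add_le_of_le [Finite α] [DecidableEq α] (hr : IsRankFn r)
    (hatom : AtomisticL α) (hstep : ∀ x a : α, IsAtom a → r (x ⊔ a) ≤ r x + 1) (x : α)
    {u v : α} (huv : u ≤ v) : r (x ⊔ v) + r u ≤ r (x ⊔ u) + r v := by
  induction u using WellFoundedGT.induction with
  | _ u ih =>
    rcases huv.eq_or_lt with rfl | huv
    · rfl
    obtain ⟨z, huz, hzv⟩ := exists_covBy_le_of_lt huv
    obtain ⟨a, ha, rfl⟩ := exists_isAtom_sup_eq_of_covBy hatom huz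
    have hz := ih _ huz.lt hzv
    have hxz := hstep (x ⊔ u) a ha
    rw [sup_assoc] at hxz
    have := hr.2 _ _ huz
    omega

theorem IsRankFn.submodular [Finite α] [DecidableEq α] (hr : IsRankFn r)
    (hatom : AtomisticL α) (hstep : ∀ x a : α, IsAtom a → r (x ⊔ a) ≤ r x + 1) (x y : α) :
    r (x ⊓ y) + r (x ⊔ y) ≤ r x + r y := by
  have := hr.rank_sup_add_le_of_le hatom hstep x (inf_le_right : x ⊓ y ≤ y)
  rw [sup_inf_self] at this
  omega

theorem not_le_sup_of_isNBB_insert {ω : {a : α // IsAtom a} → {a : α // IsAtom a} → Prop}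
    [DecidableEq α] {a : {a : α // IsAtom a}} {s : Finset {a : α // IsAtom a}}
    (has : ∀ d ∈ s, ω a d) (hs : IsNBB ω (insert a s)) : ¬ (a : α) ≤ s.sup Subtype.val := by
  intro hle
  rcases s.eq_empty_or_nonempty with rfl | hne
  · exact a.2.1 (le_bot_iff.1 hle)
  · exact hs s (subset_insert a s) ⟨hne, a, has, hle⟩

theorem IsRankFn.rank_sup_eq_card_of_isNBB [Finite α] (hr : IsRankFn r)
    (hstep : ∀ x a : α, IsAtom a → r (x ⊔ a) ≤ r x + 1)
    {ω : {a : α // IsAtom a} → {a : α // IsAtom a} → Prop} [IsStrictTotalOrder _ ω]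
    {I : Finset {a : α // IsAtom a}} (hI : IsNBB ω I) : r (I.sup Subtype.val) = #I := by
  classical
  -- from here on `<` on atoms is `ω`, not the order inherited from `α`
  let _ := linearOrderOfSTO ω
  induction I using Finset.induction_on_min with
  | empty => simp [hr.1]
  | insert a s has ih =>
    have has' : a ∉ s := fun h => irrefl_of ω a (has a h)
    have hle : ¬ (a : α) ≤ s.sup Subtype.val := not_le_sup_of_isNBB_insert has hI
    rw [sup_insert, sup_comm, hr.rank_sup_atom_of_not_le hstep a.2 hle,
      ih fun D hD => hI D (hD.trans (subset_insert a s)), card_insert_of_notMem has']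

variable [DecidableEq α]

def IsIrredundant (J : Finset {a : α // IsAtom a}) : Prop :=
  ∀ j ∈ J, ¬ (j : α) ≤ (J.erase j).sup Subtype.val

theorem IsIrredundant.indepSet {J : Finset {a : α // IsAtom a}} (hJ : IsIrredundant J) :
    IndepSet J := by
  obtain ⟨ω, hω, hJω⟩ := exists_isStrictTotalOrder_forall_mem_rel (J : Set {a : α // IsAtom a})
  refine ⟨ω, hω, ?_⟩
  rintro D hD ⟨⟨d, hd⟩, a, had, hle⟩
  have haJ : a ∈ J := by
    by_contra haJ
    exact asymm (had d hd) (hJω d (hD hd) a haJ)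
  have haD : a ∉ D := fun h => irrefl a (had a h)
  refine hJ a haJ (hle.trans (sup_mono fun x hx => mem_erase.2 ⟨?_, hD hx⟩))
  rintro rfl
  exact haD hx

theorem exists_isIrredundant_subset_sup_eq (S : Finset {a : α // IsAtom a}) :
    ∃ J ⊆ S, IsIrredundant J ∧ J.sup Subtype.val = S.sup Subtype.val := by
  obtain ⟨J, hJ, hmin⟩ := (S.powerset.filter fun J => J.sup Subtype.val = S.sup Subtype.val
    ).exists_min_image card ⟨S, by simp⟩
  rw [mem_filter, mem_powerset] at hJ
  refine ⟨J, hJ.1, fun j hj hle => ?_, hJ.2⟩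
  have hsup : (J.erase j).sup Subtype.val = J.sup Subtype.val := by
    conv_rhs => rw [← insert_erase hj]
    rw [sup_insert, sup_eq_right.2 hle]
  have := hmin (J.erase j) (by simp [hsup, hJ.2, (erase_subset j J).trans hJ.1])
  exact (card_erase_lt_of_mem hj).not_ge this

theorem rank_sup_atom_le_of_forall_indepSet (hatom : AtomisticL α)
    (H : ∀ I : Finset {a : α // IsAtom a}, IndepSet I → r (I.sup Subtype.val) = #I)
    (x a : α) (ha : IsAtom a) : r (x ⊔ a) ≤ r x + 1 := by
  obtain ⟨S, rfl⟩ := hatom x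
  obtain ⟨J, -, hJ, hJsup⟩ := exists_isIrredundant_subset_sup_eq S
  obtain ⟨K, hKJ, hK, hKsup⟩ := exists_isIrredundant_subset_sup_eq (insert ⟨a, ha⟩ J)
  calc r (S.sup Subtype.val ⊔ a) = r (K.sup Subtype.val) := by
        rw [hKsup, sup_insert, hJsup, sup_comm]
    _ = #K := H K hK.indepSet
    _ ≤ #J + 1 := (card_le_card hKJ).trans (card_insert_le _ _)
    _ = r (S.sup Subtype.val) + 1 := by rw [← hJsup, H J hJ.indepSet]

end Lattice

/-- A finite, bounded, atomistic, graded lattice is geometric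
(its rank function is submodular) if and only if every independent set `I`
satisfies `rank(⋁ I) = |I|` (i.e. every independent set is geometric). -/
theorem geometric_iff_indep_geometric (r : L → ℕ) (hr : IsRankFn r)
    (hatom : AtomisticL L) :
    (∀ x y : L, r (x ⊓ y) + r (x ⊔ y) ≤ r x + r y) ↔
      (∀ I : Finset {a : L // IsAtom a}, IndepSet I → r (I.sup Subtype.val) = I.card) := by
  constructor
  · intro hsub I ⟨ω, _, hI⟩
    have hstep : ∀ x a : L, IsAtom a → r (x ⊔ a) ≤ r x + 1 := fun x a ha => by
      have := hsub x a
      rw [hr.rank_of_isAtom ha] at this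
      omega
    exact hr.rank_sup_eq_card_of_isNBB hstep hI
  · exact fun H => hr.submodular hatom (rank_sup_atom_le_of_forall_indepSet hatom H)
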